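/- Lower bound by expansion: for any p ≥ 1, any graph G = (V,E) (edges as ordered pairs), and any nonempty I, J ⊆ V, N_{ε,p}(G) ≥ c · min{p, |E ∩ (I×J)|} / √(|I||J|) for a universal constant c > 0. -/

import Mathlib

/-!
Test the bilinear form on the normalized indicators `s = |I|^{-1/2} 1_I`, `t = |J|^{-1/2} 1_J`:
it equals `S / √(|I||J|)`, where `S` is the sum of the signs over the `m` edges in `I × J`, so it
suffices that `‖S‖_p ≥ min(p, m) / 4`. Fix `k = min(⌊p⌋, m) ≥ min(p, m) / 2` of these edges.
With probability `2^{-k}` all their signs are `+1`, and then `S = k + R` where `R`, the sum over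
the remaining edges, is independent of that event and centred, so `E|k + R|^p ≥ k^p` by Jensen.
Hence `E|S|^p ≥ 2^{-k} k^p ≥ (k/2)^p` because `k ≤ p`.
-/

open MeasureTheory ProbabilityTheory
open scoped Classical

/-- The `L_p` Rademacher norm `N_{ε,p}(G)` of a graph `G`, with respect to a family `ε`
of random signs indexed by ordered pairs of vertices. -/
noncomputable def graphRadNorm {V : Type*} [Fintype V] {Ω : Type*} [MeasureSpace Ω]
    (G : SimpleGraph V) (ε : V × V → Ω → ℝ) (p : ℝ) : ℝ :=
  sSup {x | ∃ s t : V → ℝ, ∑ v, s v ^ 2 ≤ 1 ∧ ∑ v, t v ^ 2 ≤ 1 ∧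
    x = (∫ ω, |∑ i, ∑ j, if G.Adj i j then ε (i, j) ω * s i * t j else 0| ^ p) ^ (1 / p)}

open Finset

section Moments

variable {Ω : Type*} [MeasureSpace Ω]

lemma integrable_abs_rpow_of_abs_le [IsFiniteMeasure (ℙ : Measure Ω)] {f : Ω → ℝ} {C p : ℝ}
    (hf : Measurable f) (hp : 0 ≤ p) (hfC : ∀ ω, |f ω| ≤ C) : Integrable fun ω => |f ω| ^ p :=
  .of_bound (hf.abs.pow_const p).aestronglyMeasurable (C ^ p) <| .of_forall fun ω => by
    rw [Real.norm_eq_abs, abs_of_nonneg (by positivity)]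
    exact Real.rpow_le_rpow (abs_nonneg _) (hfC ω) hp

lemma integral_abs_rpow_rpow_le_of_abs_le [IsProbabilityMeasure (ℙ : Measure Ω)]
    {f : Ω → ℝ} {C p : ℝ} (hC : 0 ≤ C) (hp : 0 < p) (hf : ∀ ω, |f ω| ≤ C) :
    (∫ ω, |f ω| ^ p) ^ (1 / p) ≤ C := by
  have hint : ∫ ω, |f ω| ^ p ≤ C ^ p := by
    simpa using integral_mono_of_nonneg (.of_forall fun ω => by positivity)
      (integrable_const (μ := ℙ) (C ^ p))
      (.of_forall fun ω => Real.rpow_le_rpow (abs_nonneg _) (hf ω) hp.le)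
  calc (∫ ω, |f ω| ^ p) ^ (1 / p) ≤ (C ^ p) ^ (1 / p) :=
        Real.rpow_le_rpow (integral_nonneg fun _ => by positivity) hint (by positivity)
    _ = C := by rw [one_div, Real.rpow_rpow_inv hC hp.ne']

lemma integral_abs_const_mul_rpow_rpow (c : ℝ) (f : Ω → ℝ) {p : ℝ} (hp : 0 < p) :
    (∫ ω, |c * f ω| ^ p) ^ (1 / p) = |c| * (∫ ω, |f ω| ^ p) ^ (1 / p) := by
  simp_rw [abs_mul, Real.mul_rpow (abs_nonneg c) (abs_nonneg _), integral_const_mul]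
  rw [Real.mul_rpow (by positivity) (integral_nonneg fun _ => by positivity), one_div,
    Real.rpow_rpow_inv (abs_nonneg c) hp.ne']

lemma abs_integral_rpow_le_integral_abs_rpow [IsProbabilityMeasure (ℙ : Measure Ω)]
    {X : Ω → ℝ} {p : ℝ} (hp : 1 ≤ p) (hX : Integrable X)
    (hXp : Integrable fun ω => |X ω| ^ p) :
    |∫ ω, X ω| ^ p ≤ ∫ ω, |X ω| ^ p :=
  calc |∫ ω, X ω| ^ p ≤ (∫ ω, |X ω|) ^ p :=
        Real.rpow_le_rpow (abs_nonneg _) (abs_integral_le_integral_abs) (by linarith)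
    _ ≤ ∫ ω, |X ω| ^ p :=
        (convexOn_rpow hp).map_integral_le
          (continuousOn_id.rpow_const fun _ _ => Or.inr (by linarith)) isClosed_Ici
          (.of_forall fun ω => abs_nonneg (X ω)) hX.abs hXp

end Moments

lemma div_two_rpow_le_pow_mul_rpow {k : ℕ} {p : ℝ} (hkp : k ≤ p) :
    ((k : ℝ) / 2) ^ p ≤ (1 / 2) ^ k * (k : ℝ) ^ p := by
  rw [div_eq_mul_one_div, Real.mul_rpow (by positivity) (by norm_num), mul_comm,
    ← Real.rpow_natCast]
  exact mul_le_mul_of_nonneg_right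
    (Real.rpow_le_rpow_of_exponent_ge (by norm_num) (by norm_num) hkp) (by positivity)

lemma min_le_two_mul_min_floor {p : ℝ} (hp : 1 ≤ p) (m : ℕ) :
    min p m ≤ 2 * (min ⌊p⌋₊ m : ℕ) := by
  rcases le_total ⌊p⌋₊ m with h | h
  · have := Nat.lt_floor_add_one p
    have : (1 : ℝ) ≤ ⌊p⌋₊ := by exact_mod_cast Nat.le_floor (by exact_mod_cast hp)
    rw [min_eq_left h]
    linarith [min_le_left p m]
  · rw [min_eq_right h]
    linarith [min_le_right p m, (m.cast_nonneg : (0 : ℝ) ≤ m)]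

lemma abs_le_one_of_eq_one_or_eq_neg_one {x : ℝ} (h : x = 1 ∨ x = -1) : |x| ≤ 1 := by
  rcases h with rfl | rfl <;> simp

lemma abs_sum_le_card {ι : Type*} {f : ι → ℝ} (hf : ∀ i, |f i| ≤ 1) (T : Finset ι) :
    |∑ i ∈ T, f i| ≤ #T :=
  calc |∑ i ∈ T, f i| ≤ ∑ i ∈ T, |f i| := abs_sum_le_sum_abs _ _
    _ ≤ ∑ i ∈ T, 1 := sum_le_sum fun i _ => hf i
    _ = #T := by simp

section Rademacher

variable {Ω : Type*} [MeasureSpace Ω] {ι : Type*}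

lemma integral_eq_zero_of_sign [IsProbabilityMeasure (ℙ : Measure Ω)] {X : Ω → ℝ}
    (hX : Measurable X) (hsign : ∀ ω, X ω = 1 ∨ X ω = -1) (hhalf : ℙ {ω | X ω = 1} = 1 / 2) :
    ∫ ω, X ω = 0 := by
  have hA : MeasurableSet {ω | X ω = 1} := hX (measurableSet_singleton 1)
  have hX_eq : X = fun ω => 2 * {ω | X ω = 1}.indicator 1 ω - 1 := by
    funext ω
    rcases hsign ω with h | h <;> simp [h, Set.indicator_apply] <;> norm_num
  rw [hX_eq, integral_sub ((integrable_const 1).indicator hA |>.const_mul 2) (integrable_const 1),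
    integral_const_mul, integral_indicator_one hA]
  simp [measureReal_def, hhalf]

lemma integral_sum_eq_zero_of_sign [IsProbabilityMeasure (ℙ : Measure Ω)] {ε : ι → Ω → ℝ}
    (hmeas : ∀ i, Measurable (ε i)) (hsign : ∀ i ω, ε i ω = 1 ∨ ε i ω = -1)
    (hhalf : ∀ i, ℙ {ω | ε i ω = 1} = 1 / 2) (T : Finset ι) : ∫ ω, ∑ i ∈ T, ε i ω = 0 := by
  rw [integral_finsetSum _ fun i _ => .of_bound (hmeas i).aestronglyMeasurable 1
    (.of_forall fun ω => abs_le_one_of_eq_one_or_eq_neg_one (hsign i ω))]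
  exact sum_eq_zero fun i _ => integral_eq_zero_of_sign (hmeas i) (hsign i) (hhalf i)

lemma measure_forall_eq_one {ε : ι → Ω → ℝ} (hind : iIndepFun ε)
    (hhalf : ∀ i, ℙ {ω | ε i ω = 1} = 1 / 2) (E : Finset ι) :
    ℙ {ω | ∀ i ∈ E, ε i ω = 1} = (1 / 2) ^ #E := by
  have h := hind.meas_biInter (S := E) (s := fun i => {ω | ε i ω = 1})
    fun i _ => ⟨{1}, measurableSet_singleton 1, rfl⟩
  have hset : {ω | ∀ i ∈ E, ε i ω = 1} = ⋂ i ∈ E, {ω | ε i ω = 1} := by ext; simp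
  rw [hset, h, prod_congr rfl fun i _ => hhalf i, prod_const]

lemma indepFun_indicator_forall_eq_one_comp_sum {ε : ι → Ω → ℝ}
    (hmeas : ∀ i, Measurable (ε i)) (hind : iIndepFun ε) {E T : Finset ι} (hET : Disjoint E T)
    {g : ℝ → ℝ} (hg : Measurable g) :
    IndepFun ({ω | ∀ i ∈ E, ε i ω = 1}.indicator (1 : Ω → ℝ)) (fun ω => g (∑ i ∈ T, ε i ω)) := by
  have hφ : Measurable ({v : E → ℝ | ∀ i, v i = 1}.indicator (1 : (E → ℝ) → ℝ)) :=
    measurable_const.indicator <| by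
      simp only [Set.ofPred_forall]
      exact .iInter fun i => measurable_pi_apply i (measurableSet_singleton 1)
  have hψ : Measurable fun v : T → ℝ => g (∑ i, v i) := hg.comp (by fun_prop)
  convert (hind.indepFun_finset E T hET hmeas).comp hφ hψ using 1
  · ext ω
    simp [Set.indicator_apply]
  · ext ω
    simp [sum_attach T (fun i => ε i ω)]

lemma pow_mul_rpow_le_integral_abs_sum_rpow [IsProbabilityMeasure (ℙ : Measure Ω)]
    {ε : ι → Ω → ℝ} (hmeas : ∀ i, Measurable (ε i)) (hind : iIndepFun ε)
    (hsign : ∀ i ω, ε i ω = 1 ∨ ε i ω = -1) (hhalf : ∀ i, ℙ {ω | ε i ω = 1} = 1 / 2)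
    {E F : Finset ι} (hEF : E ⊆ F) {p : ℝ} (hp : 1 ≤ p) :
    (1 / 2) ^ #E * (#E : ℝ) ^ p ≤ ∫ ω, |∑ i ∈ F, ε i ω| ^ p := by
  set A := {ω | ∀ i ∈ E, ε i ω = 1}
  set R := fun ω => ∑ i ∈ F \ E, ε i ω
  have hA : MeasurableSet A := by
    simp only [A, Set.ofPred_forall]
    exact .biInter E.countable_toSet fun i _ => hmeas i (measurableSet_singleton 1)
  have hsum_le (T : Finset ι) (ω : Ω) : |∑ i ∈ T, ε i ω| ≤ #T :=
    abs_sum_le_card (fun i => abs_le_one_of_eq_one_or_eq_neg_one (hsign i ω)) T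
  have hR : Integrable R :=
    .of_bound (by fun_prop) #(F \ E) (.of_forall fun ω => hsum_le (F \ E) ω)
  have hRp : Integrable fun ω => |#E + R ω| ^ p := by
    refine integrable_abs_rpow_of_abs_le (C := #E + #(F \ E)) (by fun_prop) (by linarith)
      fun ω => ?_
    calc |#E + R ω| ≤ |(#E : ℝ)| + |R ω| := abs_add_le _ _
      _ ≤ #E + #(F \ E) := by rw [Nat.abs_cast]; gcongr; exact hsum_le _ ω
  have hjensen : (#E : ℝ) ^ p ≤ ∫ ω, |#E + R ω| ^ p := by
    simpa [integral_add (integrable_const _) hR, R,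
      integral_sum_eq_zero_of_sign hmeas hsign hhalf] using
      abs_integral_rpow_le_integral_abs_rpow hp ((integrable_const _).add hR) hRp
  have hsplit : ∀ ω ∈ A, ∑ i ∈ F, ε i ω = #E + R ω := by
    intro ω hω
    rw [← sum_sdiff hEF, sum_congr rfl hω]
    simp [R, add_comm]
  have hindep : IndepFun (A.indicator 1) (fun ω => |#E + R ω| ^ p) :=
    indepFun_indicator_forall_eq_one_comp_sum hmeas hind (disjoint_sdiff : Disjoint E (F \ E))
      ((measurable_const_add (#E : ℝ)).abs.pow_const p)
  calc (1 / 2) ^ #E * (#E : ℝ) ^ p ≤ (ℙ : Measure Ω).real A * ∫ ω, |#E + R ω| ^ p := by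
        rw [measureReal_def, measure_forall_eq_one hind hhalf]
        simpa using hjensen
    _ = ∫ ω, A.indicator 1 ω * |#E + R ω| ^ p := by
        rw [← integral_indicator_one hA]
        exact (hindep.integral_mul_eq_mul_integral
          (measurable_const.indicator hA).aestronglyMeasurable hRp.aestronglyMeasurable).symm
    _ ≤ ∫ ω, |∑ i ∈ F, ε i ω| ^ p := by
        refine integral_mono_of_nonneg
          (.of_forall fun ω =>
            mul_nonneg (A.indicator_nonneg (fun _ _ => zero_le_one) ω) (by positivity))
          (integrable_abs_rpow_of_abs_le (by fun_prop) (by linarith) (hsum_le F))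
          (.of_forall fun ω => ?_)
        by_cases hω : ω ∈ A
        · simp [hω, hsplit ω hω]
        · simp [hω]; positivity

lemma min_div_four_le_integral_abs_sum_rpow_rpow [IsProbabilityMeasure (ℙ : Measure Ω)]
    {ε : ι → Ω → ℝ} (hmeas : ∀ i, Measurable (ε i)) (hind : iIndepFun ε)
    (hsign : ∀ i ω, ε i ω = 1 ∨ ε i ω = -1) (hhalf : ∀ i, ℙ {ω | ε i ω = 1} = 1 / 2)
    (F : Finset ι) {p : ℝ} (hp : 1 ≤ p) :
    min p #F / 4 ≤ (∫ ω, |∑ i ∈ F, ε i ω| ^ p) ^ (1 / p) := by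
  obtain ⟨E, hEF, hE⟩ := exists_subset_card_eq (min_le_right ⌊p⌋₊ #F)
  have hEp : (#E : ℝ) ≤ p := by
    rw [hE]
    exact (Nat.cast_le.2 (min_le_left _ _)).trans (Nat.floor_le (by linarith))
  have hp0 : 0 < p := by linarith
  calc min p #F / 4 ≤ (#E : ℝ) / 2 := by linarith [hE ▸ min_le_two_mul_min_floor hp #F]
    _ = (((#E : ℝ) / 2) ^ p) ^ (1 / p) := by
        rw [one_div, Real.rpow_rpow_inv (by positivity) hp0.ne']
    _ ≤ (∫ ω, |∑ i ∈ F, ε i ω| ^ p) ^ (1 / p) := by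
        gcongr
        exact (div_two_rpow_le_pow_mul_rpow hEp).trans
          (pow_mul_rpow_le_integral_abs_sum_rpow hmeas hind hsign hhalf hEF hp)

end Rademacher

noncomputable def normalizedIndicator {V : Type*} (I : Finset V) (v : V) : ℝ :=
  if v ∈ I then (√(#I : ℝ))⁻¹ else 0

section Graph

variable {V : Type*} [Fintype V]

lemma abs_graph_bilinear_le_card_sq (G : SimpleGraph V) {e : V × V → ℝ}
    (he : ∀ q, |e q| ≤ 1) {s t : V → ℝ} (hs : ∑ v, s v ^ 2 ≤ 1) (ht : ∑ v, t v ^ 2 ≤ 1) :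
    |∑ i, ∑ j, if G.Adj i j then e (i, j) * s i * t j else 0| ≤ Fintype.card V ^ 2 := by
  have habs {u : V → ℝ} (hu : ∑ v, u v ^ 2 ≤ 1) (v : V) : |u v| ≤ 1 :=
    sq_le_one_iff_abs_le_one _ |>.1 <|
      (single_le_sum (fun i _ => sq_nonneg (u i)) (mem_univ v)).trans hu
  calc |∑ i, ∑ j, if G.Adj i j then e (i, j) * s i * t j else 0|
      ≤ ∑ i, ∑ j, |if G.Adj i j then e (i, j) * s i * t j else 0| :=
        (abs_sum_le_sum_abs _ _).trans (sum_le_sum fun i _ => abs_sum_le_sum_abs _ _)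
    _ ≤ ∑ _i : V, ∑ _j : V, 1 := by
        gcongr with i _ j _
        split_ifs
        · rw [abs_mul, abs_mul]
          exact mul_le_one₀ (mul_le_one₀ (he _) (abs_nonneg _) (habs hs i)) (abs_nonneg _)
            (habs ht j)
        · simp
    _ = Fintype.card V ^ 2 := by simp [sq]

lemma le_graphRadNorm {Ω : Type*} [MeasureSpace Ω] [IsProbabilityMeasure (ℙ : Measure Ω)]
    (G : SimpleGraph V) {ε : V × V → Ω → ℝ} (hε : ∀ q ω, |ε q ω| ≤ 1) {p : ℝ} (hp : 0 < p)
    {s t : V → ℝ} (hs : ∑ v, s v ^ 2 ≤ 1) (ht : ∑ v, t v ^ 2 ≤ 1) :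
    (∫ ω, |∑ i, ∑ j, if G.Adj i j then ε (i, j) ω * s i * t j else 0| ^ p) ^ (1 / p) ≤
      graphRadNorm G ε p := by
  refine le_csSup ⟨Fintype.card V ^ 2, ?_⟩ ⟨s, t, hs, ht, rfl⟩
  rintro _ ⟨s, t, hs, ht, rfl⟩
  exact integral_abs_rpow_rpow_le_of_abs_le (by positivity) hp fun ω =>
    abs_graph_bilinear_le_card_sq G (hε · ω) hs ht

lemma sum_normalizedIndicator_sq_le_one (I : Finset V) :
    ∑ v, normalizedIndicator I v ^ 2 ≤ 1 := by
  simpa [normalizedIndicator, ite_pow] using mul_inv_le_one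

lemma graph_bilinear_normalizedIndicator (G : SimpleGraph V) (e : V × V → ℝ)
    (I J : Finset V) :
    ∑ i, ∑ j, (if G.Adj i j then e (i, j) * normalizedIndicator I i * normalizedIndicator J j
      else 0) = (√(#I * #J))⁻¹ * ∑ q ∈ (I ×ˢ J).filter (fun q => G.Adj q.1 q.2), e q := by
  have hterm (i j : V) : (if G.Adj i j then e (i, j) * normalizedIndicator I i *
      normalizedIndicator J j else 0) = if (i, j) ∈ (I ×ˢ J).filter (fun q => G.Adj q.1 q.2)
        then (√(#I * #J))⁻¹ * e (i, j) else 0 := by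
    by_cases hij : G.Adj i j <;> by_cases hi : i ∈ I <;> by_cases hj : j ∈ J <;>
      simp [normalizedIndicator, hij, hi, hj, Real.sqrt_mul, mul_comm, mul_assoc]
  simp_rw [hterm]
  rw [← Fintype.sum_prod_type' (f := fun i j => _), sum_ite_mem, univ_inter, mul_sum]

end Graph

theorem stmt15 :
    ∃ c : ℝ, 0 < c ∧
      ∀ (V : Type) [Fintype V] (G : SimpleGraph V)
        (Ω : Type) [MeasureSpace Ω] [IsProbabilityMeasure (ℙ : Measure Ω)]
        (ε : V × V → Ω → ℝ),
        (∀ q, Measurable (ε q)) →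
        iIndepFun ε ℙ →
        (∀ q ω, ε q ω = 1 ∨ ε q ω = -1) →
        (∀ q, ℙ {ω | ε q ω = 1} = 1 / 2) →
        ∀ p : ℝ, 1 ≤ p →
        ∀ I J : Finset V, I.Nonempty → J.Nonempty →
          c * min p (((I ×ˢ J).filter fun e => G.Adj e.1 e.2).card : ℝ) /
              Real.sqrt (I.card * J.card) ≤
            graphRadNorm G ε p := by
  refine ⟨1 / 4, by norm_num, fun V _ G Ω _ _ ε hmeas hind hsign hhalf p hp I J _ _ => ?_⟩
  set F := (I ×ˢ J).filter fun e => G.Adj e.1 e.2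
  have hε (q : V × V) (ω : Ω) : |ε q ω| ≤ 1 := abs_le_one_of_eq_one_or_eq_neg_one (hsign q ω)
  calc 1 / 4 * min p #F / √(#I * #J) = (√(#I * #J))⁻¹ * (min p #F / 4) := by ring
    _ ≤ (√(#I * #J))⁻¹ * (∫ ω, |∑ q ∈ F, ε q ω| ^ p) ^ (1 / p) := by
        gcongr
        exact min_div_four_le_integral_abs_sum_rpow_rpow hmeas hind hsign hhalf F hp
    _ = (∫ ω, |∑ i, ∑ j, if G.Adj i j then ε (i, j) ω * normalizedIndicator I i *
          normalizedIndicator J j else 0| ^ p) ^ (1 / p) := by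
        have hbilinear (ω : Ω) : (∑ i, ∑ j, if G.Adj i j then
            ε (i, j) ω * normalizedIndicator I i * normalizedIndicator J j else 0) =
              (√(#I * #J))⁻¹ * ∑ q ∈ F, ε q ω :=
          graph_bilinear_normalizedIndicator G (ε · ω) I J
        simp_rw [hbilinear]
        rw [integral_abs_const_mul_rpow_rpow _ _ (by linarith), abs_of_nonneg (by positivity)]
    _ ≤ graphRadNorm G ε p :=
        le_graphRadNorm G hε (by linarith) (sum_normalizedIndicator_sq_le_one I)
          (sum_normalizedIndicator_sq_le_one J)
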